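/- arXiv:0901.3124 — 4 statements merged into one kernel-verified Lean document; each statement's English description precedes it below -/
import Mathlib

section
/- A Laurent polynomial g = Σ_k g_k u^k ∈ Z[u_1^{±1},...,u_d^{±1}] lies in the ideal (f^(d)) + I^3, where I = {h : h(1,...,1)=0} is the augmentation ideal, if and only if: (A) Σ_k g_k = 0; (B) Σ_k g_k k_i = 0 for every i; (C) Σ_k g_k k_i k_j = 0 for all i ≠ j; and (D) Σ_k g_k (k_i^2 - k_j^2) = 0 for all i ≠ j. -/
/-- The ring of Laurent polynomials `ℤ[u₁^{±1},…,u_d^{±1}]`. -/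
abbrev Rd (d : ℕ) : Type := AddMonoidAlgebra ℤ (Fin d → ℤ)

/-- The variable `uᵢ`. -/
noncomputable def U (d : ℕ) (i : Fin d) : Rd d :=
  AddMonoidAlgebra.single (Pi.single i 1) 1

/-- The inverse variable `uᵢ⁻¹`. -/
noncomputable def Uinv (d : ℕ) (i : Fin d) : Rd d :=
  AddMonoidAlgebra.single (-Pi.single i 1) 1

/-- `f^(d) = 2d - ∑ᵢ (uᵢ + uᵢ⁻¹)`. -/
noncomputable def fd (d : ℕ) : Rd d :=
  AddMonoidAlgebra.single 0 ((2 * d : ℤ)) - ∑ i : Fin d, (U d i + Uinv d i)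

/-- The augmentation map (evaluation at `(1,…,1)`). -/
noncomputable def aug (d : ℕ) : Rd d →+* ℤ :=
  ((AddMonoidAlgebra.lift ℤ ℤ (Fin d → ℤ)) 1).toRingHom

/-- The augmentation ideal `I = {h : h(1,…,1) = 0}`. -/
noncomputable def augIdeal (d : ℕ) : Ideal (Rd d) := RingHom.ker (aug d)

namespace StAux
variable {d : ℕ}

noncomputable def L (c : (Fin d → ℤ) → ℤ) : Rd d →+ ℤ :=
  (Finsupp.liftAddHom (fun k => AddMonoidHom.mulRight (c k))).comp
    AddMonoidAlgebra.coeffAddEquiv.toAddMonoidHom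

lemma L_single (c : (Fin d → ℤ) → ℤ) (k : Fin d → ℤ) (a : ℤ) :
    L c (AddMonoidAlgebra.single k a) = a * c k := Finsupp.liftAddHom_apply_single _ _ _

lemma L_apply (c : (Fin d → ℤ) → ℤ) (g : Rd d) :
    L c g = ∑ k ∈ g.coeff.support, g.coeff k * c k := rfl

lemma aug_single (k : Fin d → ℤ) (a : ℤ) : aug d (AddMonoidAlgebra.single k a) = a := by
  simp [aug, AddMonoidAlgebra.lift_single]

lemma aug_eq_L1 (g : Rd d) : aug d g = L (fun _ => 1) g := by
  induction g using AddMonoidAlgebra.induction_linear with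
  | zero => simp
  | add f g hf hg => rw [map_add, map_add, hf, hg]
  | single k a => rw [aug_single, L_single, mul_one]

noncomputable def B (i : Fin d) : Rd d →+ ℤ := L (fun k => k i)
noncomputable def S (i j : Fin d) : Rd d →+ ℤ := L (fun k => k i * k j)

lemma B_mul (i : Fin d) (x y : Rd d) :
    B i (x * y) = B i x * aug d y + aug d x * B i y := by
  induction x using AddMonoidAlgebra.induction_linear with
  | zero => simp
  | add f g hf hg => simp only [add_mul, map_add, hf, hg]; ring
  | single k a =>
    induction y using AddMonoidAlgebra.induction_linear with
    | zero => simp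
    | add f g hf hg => simp only [mul_add, map_add, hf, hg]; ring
    | single l b =>
      rw [AddMonoidAlgebra.single_mul_single]
      simp only [B, L_single, aug_single, Pi.add_apply]
      ring

lemma S_mul (i j : Fin d) (x y : Rd d) :
    S i j (x * y) = S i j x * aug d y + B i x * B j y + B j x * B i y + aug d x * S i j y := by
  induction x using AddMonoidAlgebra.induction_linear with
  | zero => simp
  | add f g hf hg => simp only [add_mul, map_add, hf, hg]; ring
  | single k a =>
    induction y using AddMonoidAlgebra.induction_linear with
    | zero => simp
    | add f g hf hg => simp only [mul_add, map_add, hf, hg]; ring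
    | single l b =>
      rw [AddMonoidAlgebra.single_mul_single]
      simp only [S, B, L_single, aug_single, Pi.add_apply]
      ring

lemma aug_mem (x : Rd d) (hx : x ∈ augIdeal d) : aug d x = 0 := hx

lemma I2_vanish (w : Rd d) (hw : w ∈ augIdeal d ^ 2) (i : Fin d) : B i w = 0 := by
  rw [pow_two] at hw
  refine Submodule.mul_induction_on hw (fun m hm n hn => ?_) (fun a b ha hb => by
    rw [map_add, ha, hb, add_zero])
  rw [B_mul, aug_mem m hm, aug_mem n hn, mul_zero, zero_mul, add_zero]

lemma I3_vanish (w : Rd d) (hw : w ∈ augIdeal d ^ 3) (i j : Fin d) : S i j w = 0 := by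
  rw [pow_succ] at hw
  refine Submodule.mul_induction_on hw (fun m hm n hn => ?_) (fun a b ha hb => by
    rw [map_add, ha, hb, add_zero])
  have hm' : m ∈ augIdeal d := (Ideal.pow_le_self (by norm_num)) hm
  rw [S_mul, aug_mem n hn, aug_mem m hm', I2_vanish m hm i, I2_vanish m hm j]
  ring


lemma aug_fd : aug d (fd d) = 0 := by
  simp only [fd, map_sub, map_sum, map_add, aug_single, U, Uinv]
  simp [mul_comm]

lemma B_fd (i : Fin d) : B i (fd d) = 0 := by
  simp only [fd, B, map_sub, map_sum, map_add, L_single, U, Uinv]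
  simp

lemma S_fd (i j : Fin d) (hij : i ≠ j) : S i j (fd d) = 0 := by
  simp only [fd, S, map_sub, map_sum, map_add, L_single, U, Uinv]
  rw [Finset.sum_eq_zero]
  · simp
  intro l _
  rcases eq_or_ne l i with rfl | hl
  · simp [Pi.single_apply, hij.symm]
  · simp only [Pi.single_apply, Pi.neg_apply]
    split_ifs <;> simp_all

lemma S_fd_diag (i : Fin d) : S i i (fd d) = -2 := by
  simp only [fd, S, map_sub, map_sum, map_add, L_single, U, Uinv]
  rw [Finset.sum_eq_single i]
  · simp
  · intro l _ hl
    simp only [Pi.single_apply, Pi.neg_apply]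
    split_ifs <;> simp_all
  · simp


noncomputable def c2 (n : ℤ) : ℤ := n * (n - 1) / 2

lemma c2_two_mul (n : ℤ) : 2 * c2 n = n * (n - 1) := by
  rw [c2]
  refine Int.two_mul_ediv_two_of_even ?_
  have := Int.even_mul_succ_self (n - 1)
  simpa [mul_comm] using this

lemma c2_zero : c2 0 = 0 := by norm_num [c2]
lemma c2_one : c2 1 = 0 := by norm_num [c2]
lemma c2_neg_one : c2 (-1) = 1 := by norm_num [c2]

lemma c2_add (a b : ℤ) : c2 (a + b) = c2 a + c2 b + a * b := by
  have h1 := c2_two_mul (a + b)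
  have h2 := c2_two_mul a
  have h3 := c2_two_mul b
  have : 2 * c2 (a + b) = 2 * (c2 a + c2 b + a * b) := by linear_combination h1 - h2 - h3
  exact mul_left_cancel₀ two_ne_zero this


abbrev Qd (d : ℕ) : Type := Rd d ⧸ (augIdeal d ^ 3)

noncomputable def pq (d : ℕ) : Rd d →+* Qd d := Ideal.Quotient.mk _

noncomputable def eps (d : ℕ) (i : Fin d) : Qd d := pq d (U d i - 1)

lemma U_sub_one_mem (i : Fin d) : U d i - 1 ∈ augIdeal d := by
  have h1 : aug d (U d i) = 1 := aug_single _ _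
  simp [augIdeal, RingHom.mem_ker, map_sub, h1]

noncomputable def Ed (d : ℕ) : Ideal (Qd d) := Ideal.map (pq d) (augIdeal d)

lemma eps_mem (i : Fin d) : eps d i ∈ Ed d :=
  Ideal.mem_map_of_mem _ (U_sub_one_mem i)

lemma prod3 {x y z : Qd d} (hx : x ∈ Ed d) (hy : y ∈ Ed d) (hz : z ∈ Ed d) :
    x * y * z = 0 := by
  have h1 : x * y * z ∈ Ed d * Ed d * Ed d := Ideal.mul_mem_mul (Ideal.mul_mem_mul hx hy) hz
  have e : Ed d * Ed d * Ed d = Ed d ^ 3 := by ring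
  rw [e] at h1
  have h2 : Ed d ^ 3 = Ideal.map (pq d) (augIdeal d ^ 3) := (Ideal.map_pow _ _ _).symm
  have h3 : Ideal.map (pq d) (augIdeal d ^ 3) ≤ ⊥ := by
    rw [Ideal.map_le_iff_le_comap]
    intro w hw
    simp only [Ideal.mem_comap, Ideal.mem_bot]
    exact Ideal.Quotient.eq_zero_iff_mem.mpr hw
  rw [h2] at h1
  exact Ideal.mem_bot.mp (h3 h1)






noncomputable def bQ (d : ℕ) (k : Fin d → ℤ) : Qd d := ∑ i, k i • eps d i

noncomputable def hc (i j : Fin d) (k : Fin d → ℤ) : ℤ :=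
  if i = j then c2 (k i) else if i < j then k i * k j else 0

noncomputable def cQ (d : ℕ) (k : Fin d → ℤ) : Qd d :=
  ∑ p ∈ Finset.univ ×ˢ (Finset.univ : Finset (Fin d)),
    hc p.1 p.2 k • (eps d p.1 * eps d p.2)

noncomputable def Fq (d : ℕ) (k : Fin d → ℤ) : Qd d := 1 + bQ d k + cQ d k

lemma bQ_mem (k : Fin d → ℤ) : bQ d k ∈ Ed d :=
  Submodule.sum_mem _ fun i _ => zsmul_mem (eps_mem i) _

lemma cQ_mem (k : Fin d → ℤ) : cQ d k ∈ Ed d :=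
  Submodule.sum_mem _ fun p _ =>
    zsmul_mem (Ideal.mul_mem_left _ _ (eps_mem p.2)) _

lemma bQ_add (k l : Fin d → ℤ) : bQ d (k + l) = bQ d k + bQ d l := by
  simp [bQ, add_smul, Finset.sum_add_distrib]

lemma mul_cQ {x : Qd d} (hx : x ∈ Ed d) (l : Fin d → ℤ) : x * cQ d l = 0 := by
  rw [cQ, Finset.mul_sum]
  refine Finset.sum_eq_zero fun p _ => ?_
  rw [mul_smul_comm, ← mul_assoc, prod3 hx (eps_mem p.1) (eps_mem p.2), smul_zero]

lemma bQ_mul_bQ (k l : Fin d → ℤ) :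
    bQ d k * bQ d l = ∑ p ∈ Finset.univ ×ˢ (Finset.univ : Finset (Fin d)),
      (k p.1 * l p.2) • (eps d p.1 * eps d p.2) := by
  rw [bQ, bQ, Finset.sum_mul_sum,
    Finset.sum_product' (f := fun i j => (k i * l j) • (eps d i * eps d j))]
  refine Finset.sum_congr rfl fun i _ => Finset.sum_congr rfl fun j _ => ?_
  rw [smul_mul_assoc, mul_smul_comm, smul_smul]

lemma asym_zero (A : Fin d → Fin d → ℤ) (hdiag : ∀ i, A i i = 0)
    (hA : ∀ i j, A i j + A j i = 0) :
    ∑ p ∈ Finset.univ ×ˢ (Finset.univ : Finset (Fin d)),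
      A p.1 p.2 • (eps d p.1 * eps d p.2) = 0 := by
  refine Finset.sum_ninvolution Prod.swap ?_ ?_ (fun p => by simp) (fun p => Prod.swap_swap p)
  · intro p
    rw [Prod.fst_swap, Prod.snd_swap, mul_comm (eps d p.2), ← add_smul, hA, zero_smul]
  · rintro ⟨i, j⟩ hp h
    have h1 : j = i := congrArg Prod.fst h
    apply hp
    subst h1
    simp [hdiag]





set_option maxHeartbeats 1000000 in
lemma cQ_addF (k l : Fin d → ℤ) :
    cQ d (k + l) = cQ d k + cQ d l + bQ d k * bQ d l := by
  have key : ∑ p ∈ Finset.univ ×ˢ (Finset.univ : Finset (Fin d)),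
      (hc p.1 p.2 (k + l) - hc p.1 p.2 k - hc p.1 p.2 l - k p.1 * l p.2) •
        (eps d p.1 * eps d p.2) = 0 := by
    refine asym_zero (fun i j => hc i j (k + l) - hc i j k - hc i j l - k i * l j)
      (fun i => ?_) (fun i j => ?_)
    · simp [hc, c2_add]
      ring
    · rcases lt_trichotomy i j with hij | rfl | hij
      · simp only [hc, if_neg hij.ne, if_neg hij.ne', if_pos hij, if_neg (not_lt_of_gt hij),
          Pi.add_apply]
        ring
      · simp [hc, c2_add]
        ring
      · simp only [hc, if_neg hij.ne, if_neg hij.ne', if_pos hij, if_neg (not_lt_of_gt hij),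
          Pi.add_apply]
        ring
  rw [← sub_eq_zero, bQ_mul_bQ, cQ, cQ, cQ, ← Finset.sum_add_distrib, ← Finset.sum_add_distrib,
    ← Finset.sum_sub_distrib]
  refine Eq.trans (Finset.sum_congr rfl fun p _ => ?_) key
  simp only [sub_smul]
  abel

set_option maxHeartbeats 1000000 in
lemma Fq_mul (k l : Fin d → ℤ) : Fq d k * Fq d l = Fq d (k + l) := by
  have e1 : bQ d k * cQ d l = 0 := mul_cQ (bQ_mem _) _
  have e2 : cQ d k * bQ d l = 0 := by rw [mul_comm]; exact mul_cQ (bQ_mem _) _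
  have e3 : cQ d k * cQ d l = 0 := mul_cQ (cQ_mem _) _
  have expand : Fq d k * Fq d l =
      1 + (bQ d k + bQ d l) + (cQ d k + cQ d l + bQ d k * bQ d l) +
        (bQ d k * cQ d l + cQ d k * bQ d l + cQ d k * cQ d l) := by
    rw [Fq, Fq]; ring
  rw [expand, e1, e2, e3, Fq, bQ_add, cQ_addF]
  ring

lemma bQ_zero : bQ d 0 = 0 := by simp [bQ]

lemma cQ_zero : cQ d 0 = 0 := by
  refine Finset.sum_eq_zero fun p _ => ?_
  have : hc p.1 p.2 0 = 0 := by
    simp only [hc, Pi.zero_apply]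
    split_ifs <;> simp [c2]
  rw [this, zero_smul]

lemma Fq_zero : Fq d 0 = 1 := by rw [Fq, bQ_zero, cQ_zero]; ring






lemma hc_single_one (a : Fin d) (p : Fin d × Fin d) : hc p.1 p.2 (Pi.single a 1) = 0 := by
  obtain ⟨i, j⟩ := p
  rcases eq_or_ne i j with rfl | hij
  · simp only [hc, if_pos rfl, Pi.single_apply]
    split_ifs <;> simp [c2_one, c2]
  · simp only [hc, if_neg hij]
    rcases eq_or_ne i a with rfl | hia
    · have h : (Pi.single i 1 : Fin d → ℤ) j = 0 := Pi.single_eq_of_ne hij.symm 1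
      split_ifs <;> simp [h]
    · have h : (Pi.single a 1 : Fin d → ℤ) i = 0 := Pi.single_eq_of_ne hia 1
      split_ifs <;> simp [h]

lemma bQ_single (a : Fin d) (n : ℤ) : bQ d (Pi.single a n) = n • eps d a := by
  rw [bQ, Finset.sum_eq_single a]
  · rw [Pi.single_eq_same]
  · intro i _ hi
    rw [Pi.single_eq_of_ne hi, zero_smul]
  · intro h
    exact absurd (Finset.mem_univ a) h

lemma Fq_single_one (a : Fin d) : Fq d (Pi.single a 1) = 1 + eps d a := by
  have h0 : cQ d (Pi.single a 1) = 0 :=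
    Finset.sum_eq_zero fun p _ => by rw [hc_single_one a p, zero_smul]
  rw [Fq, bQ_single, one_smul, h0, add_zero]

lemma hc_single_neg_one (a : Fin d) (p : Fin d × Fin d) (hp : p ≠ (a, a)) :
    hc p.1 p.2 (Pi.single a (-1) : Fin d → ℤ) = 0 := by
  obtain ⟨i, j⟩ := p
  rcases eq_or_ne i j with rfl | hij
  · have hia : i ≠ a := fun h => hp (by rw [h])
    have h : (Pi.single a (-1) : Fin d → ℤ) i = 0 := Pi.single_eq_of_ne hia _
    simp only [hc, if_pos rfl, h]
    simp [c2]
  · simp only [hc, if_neg hij]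
    rcases eq_or_ne i a with rfl | hia
    · have h : (Pi.single i (-1) : Fin d → ℤ) j = 0 := Pi.single_eq_of_ne hij.symm _
      split_ifs <;> simp [h]
    · have h : (Pi.single a (-1) : Fin d → ℤ) i = 0 := Pi.single_eq_of_ne hia _
      split_ifs <;> simp [h]

lemma Fq_single_neg_one (a : Fin d) :
    Fq d (Pi.single a (-1) : Fin d → ℤ) = 1 - eps d a + eps d a * eps d a := by
  have h0 : cQ d (Pi.single a (-1) : Fin d → ℤ) = eps d a * eps d a := by
    rw [cQ, Finset.sum_eq_single_of_mem (a, a)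
      (Finset.mk_mem_product (Finset.mem_univ _) (Finset.mem_univ _))
      (fun p _ hp => by rw [hc_single_neg_one a p hp, zero_smul])]
    simp only [hc, if_pos rfl, Pi.single_eq_same, c2_neg_one, if_true, eq_self_iff_true,
      one_smul]
  rw [Fq, bQ_single, h0, neg_one_zsmul]
  ring





lemma pq_U (i : Fin d) : pq d (U d i) = 1 + eps d i := by
  rw [eps, map_sub, map_one]; ring

lemma U_mul_Uinv (i : Fin d) : U d i * Uinv d i = 1 := by
  rw [U, Uinv, AddMonoidAlgebra.single_mul_single, mul_one, add_neg_cancel,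
    AddMonoidAlgebra.one_def]

lemma pq_Uinv (i : Fin d) : pq d (Uinv d i) = 1 - eps d i + eps d i * eps d i := by
  have h3 : eps d i * eps d i * eps d i = 0 := prod3 (eps_mem i) (eps_mem i) (eps_mem i)
  have h2 : (1 + eps d i) * (1 - eps d i + eps d i * eps d i) = 1 := by
    linear_combination h3
  calc pq d (Uinv d i)
      = pq d (Uinv d i) * ((1 + eps d i) * (1 - eps d i + eps d i * eps d i)) := by
        rw [h2, mul_one]
    _ = pq d (U d i * Uinv d i) * (1 - eps d i + eps d i * eps d i) := by
        rw [map_mul, pq_U]; ring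
    _ = 1 - eps d i + eps d i * eps d i := by rw [U_mul_Uinv, map_one, one_mul]

lemma single_eq_U (a : Fin d) : AddMonoidAlgebra.single (Pi.single a (1:ℤ)) (1:ℤ) = U d a := rfl

lemma single_eq_Uinv (a : Fin d) :
    AddMonoidAlgebra.single (Pi.single a (-1:ℤ)) (1:ℤ) = Uinv d a := by
  rw [Uinv]
  congr 1
  ext j
  rcases eq_or_ne j a with rfl | hj
  · simp
  · simp [Pi.single_eq_of_ne hj]

lemma single_add_one (x y : Fin d → ℤ) :
    AddMonoidAlgebra.single (x + y) (1:ℤ) =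
      AddMonoidAlgebra.single x (1:ℤ) * AddMonoidAlgebra.single y (1:ℤ) := by
  rw [AddMonoidAlgebra.single_mul_single, one_mul]

lemma pq_single_pi (a : Fin d) (n : ℤ) :
    pq d (AddMonoidAlgebra.single (Pi.single a n : Fin d → ℤ) 1) = Fq d (Pi.single a n) := by
  induction n using Int.induction_on with
  | zero =>
    rw [show (Pi.single a (0:ℤ) : Fin d → ℤ) = 0 from Pi.single_zero a, ←
      AddMonoidAlgebra.one_def, map_one, Fq_zero]
  | succ n ih =>
    have hsum : (Pi.single a ((n : ℤ) + 1) : Fin d → ℤ) = Pi.single a (n : ℤ) + Pi.single a 1 :=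
      Pi.single_add a _ _
    rw [hsum, single_add_one, map_mul, ih, single_eq_U, pq_U, ← Fq_single_one, Fq_mul, ← hsum]
  | pred n ih =>
    have hsum : (Pi.single a (-(n : ℤ) - 1) : Fin d → ℤ) =
        Pi.single a (-(n : ℤ)) + Pi.single a (-1) := by
      rw [sub_eq_add_neg]
      exact Pi.single_add a _ _
    rw [hsum, single_add_one, map_mul, ih, single_eq_Uinv, pq_Uinv, ← Fq_single_neg_one,
      Fq_mul, ← hsum]

lemma pq_single (k : Fin d → ℤ) :
    pq d (AddMonoidAlgebra.single k (1:ℤ)) = Fq d k := by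
  have aux : ∀ s : Finset (Fin d),
      pq d (AddMonoidAlgebra.single (∑ i ∈ s, (Pi.single i (k i) : Fin d → ℤ)) 1) =
        Fq d (∑ i ∈ s, (Pi.single i (k i) : Fin d → ℤ)) := by
    intro s
    induction s using Finset.cons_induction with
    | empty => rw [Finset.sum_empty, ← AddMonoidAlgebra.one_def, map_one, Fq_zero]
    | cons a s ha ih =>
      rw [Finset.sum_cons, single_add_one, map_mul, ih, pq_single_pi, Fq_mul]
  have := aux Finset.univ
  rwa [Finset.univ_sum_single k] at this



end StAux

namespace StAux
variable {d : ℕ}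

lemma sum_eq_L1 (w : Rd d) : ∑ k ∈ w.coeff.support, w.coeff k = L (fun _ => 1) w := by
  rw [L_apply]
  exact Finset.sum_congr rfl fun k _ => (mul_one _).symm

lemma D_sum (i j : Fin d) (w : Rd d) :
    ∑ k ∈ w.coeff.support, w.coeff k * ((k i) ^ 2 - (k j) ^ 2) = S i i w - S j j w := by
  rw [S, S, L_apply, L_apply, ← Finset.sum_sub_distrib]
  refine Finset.sum_congr rfl fun k _ => ?_
  ring

lemma pq_fd : pq d (fd d) = -∑ i : Fin d, eps d i * eps d i := by
  have h1 : AddMonoidAlgebra.single (0 : Fin d → ℤ) ((2 * d : ℤ)) =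
      ((2 * d : ℤ)) • (1 : Rd d) := by
    rw [AddMonoidAlgebra.one_def, AddMonoidAlgebra.smul_single, smul_eq_mul, mul_one]
  rw [fd, map_sub, map_sum, h1, map_zsmul, map_one]
  have h2 : ∀ i : Fin d, pq d (U d i + Uinv d i) = 2 + eps d i * eps d i := fun i => by
    rw [map_add, pq_U, pq_Uinv]; ring
  rw [Finset.sum_congr rfl (fun i _ => h2 i), Finset.sum_add_distrib, Finset.sum_const,
    Finset.card_univ, Fintype.card_fin]
  simp only [zsmul_eq_mul, nsmul_eq_mul]
  push_cast
  ring

end StAux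

set_option maxHeartbeats 2000000 in
open StAux in
/-- A Laurent polynomial `g = ∑ₖ gₖ uᵏ` lies in the ideal `(f^(d)) + I³` if and
only if it satisfies conditions (A)–(D). -/
theorem stmt1 (d : ℕ) (hd : 2 ≤ d) (g : Rd d) :
    g ∈ Ideal.span {fd d} + (augIdeal d) ^ 3 ↔
      ((∑ k ∈ g.coeff.support, g.coeff k = 0) ∧
       (∀ i : Fin d, ∑ k ∈ g.coeff.support, g.coeff k * k i = 0) ∧
       (∀ i j : Fin d, i ≠ j → ∑ k ∈ g.coeff.support, g.coeff k * (k i * k j) = 0) ∧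
       (∀ i j : Fin d, i ≠ j → ∑ k ∈ g.coeff.support, g.coeff k * ((k i) ^ 2 - (k j) ^ 2) = 0)) := by
  constructor
  · -- forward direction
    intro hg
    rw [Submodule.add_eq_sup, Submodule.mem_sup] at hg
    obtain ⟨y, hy, z, hz, rfl⟩ := hg
    obtain ⟨p, rfl⟩ := Ideal.mem_span_singleton'.mp hy
    have hz1 : aug d z = 0 := Ideal.pow_le_self three_ne_zero hz
    have hz2 : ∀ i, B i z = 0 := fun i =>
      I2_vanish z (Ideal.pow_le_pow_right (by norm_num) hz) i
    have hz3 : ∀ i j, S i j z = 0 := fun i j => I3_vanish z hz i j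
    have hy1 : aug d (p * fd d) = 0 := by rw [map_mul, aug_fd, mul_zero]
    have hy2 : ∀ i, B i (p * fd d) = 0 := fun i => by
      rw [B_mul, aug_fd, B_fd, mul_zero, mul_zero, add_zero]
    have hy3 : ∀ i j, i ≠ j → S i j (p * fd d) = 0 := fun i j hij => by
      rw [S_mul, aug_fd, B_fd, B_fd, S_fd i j hij]
      ring
    have hy4 : ∀ i, S i i (p * fd d) = aug d p * (-2) := fun i => by
      rw [S_mul, aug_fd, B_fd, S_fd_diag]
      ring
    refine ⟨?_, ?_, ?_, ?_⟩
    · rw [sum_eq_L1, ← aug_eq_L1, map_add, hy1, hz1, add_zero]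
    · intro i
      have : ∑ k ∈ (p * fd d + z).coeff.support, (p * fd d + z).coeff k * k i = B i (p * fd d + z) :=
        (StAux.L_apply _ _).symm
      rw [this, map_add, hy2, hz2, add_zero]
    · intro i j hij
      have : ∑ k ∈ (p * fd d + z).coeff.support, (p * fd d + z).coeff k * (k i * k j) =
          S i j (p * fd d + z) := (StAux.L_apply _ _).symm
      rw [this, map_add, hy3 i j hij, hz3, add_zero]
    · intro i j hij
      rw [D_sum, map_add, map_add, hy4 i, hy4 j, hz3, hz3]
      ring
  · -- converse direction
    rintro ⟨hA, hB, hC, hD⟩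
    set i₀ : Fin d := ⟨0, by omega⟩ with hi₀
    set m : ℤ := ∑ k ∈ g.coeff.support, g.coeff k * c2 (k i₀) with hm_def
    -- all diagonal second moments agree
    have h2m : ∀ i : Fin d, 2 * (∑ k ∈ g.coeff.support, g.coeff k * c2 (k i)) =
        ∑ k ∈ g.coeff.support, g.coeff k * (k i) ^ 2 - ∑ k ∈ g.coeff.support, g.coeff k * k i := by
      intro i
      rw [Finset.mul_sum, ← Finset.sum_sub_distrib]
      refine Finset.sum_congr rfl fun k _ => ?_
      linear_combination g.coeff k * c2_two_mul (k i)
    have hsq : ∀ i j : Fin d, ∑ k ∈ g.coeff.support, g.coeff k * (k i) ^ 2 =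
        ∑ k ∈ g.coeff.support, g.coeff k * (k j) ^ 2 := by
      intro i j
      rcases eq_or_ne i j with rfl | hij
      · rfl
      · have h0 := hD i j hij
        have h' : ∑ k ∈ g.coeff.support, (g.coeff k * (k i) ^ 2 - g.coeff k * (k j) ^ 2) = 0 := by
          rw [← h0]
          exact Finset.sum_congr rfl fun k _ => by ring
        rw [Finset.sum_sub_distrib] at h'
        linarith
    have hm : ∀ i : Fin d, ∑ k ∈ g.coeff.support, g.coeff k * c2 (k i) = m := by
      intro i
      have e1 := h2m i
      have e2 := h2m i₀
      rw [hB i] at e1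
      rw [hB i₀] at e2
      have := hsq i i₀
      rw [hm_def]
      linarith
    -- compute pq d g
    have hg1 : pq d g = ∑ k ∈ g.coeff.support, g.coeff k • Fq d k := by
      have hps : ∀ k : Fin d → ℤ, pq d (AddMonoidAlgebra.single k (1:ℤ)) = Fq d k := pq_single
      conv_lhs => rw [← AddMonoidAlgebra.sum_coeff_single g]
      rw [Finsupp.sum, map_sum]
      refine Finset.sum_congr rfl fun k _ => ?_
      have h1 : (AddMonoidAlgebra.single k (g.coeff k) : Rd d) = g.coeff k • AddMonoidAlgebra.single k (1:ℤ) := by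
        rw [AddMonoidAlgebra.smul_single, smul_eq_mul, mul_one]
      rw [h1, map_zsmul, hps]
    have hg2 : pq d g = ∑ i : Fin d, m • (eps d i * eps d i) := by
      rw [hg1]
      simp only [Fq, smul_add]
      rw [Finset.sum_add_distrib, Finset.sum_add_distrib]
      have t1 : ∑ k ∈ g.coeff.support, g.coeff k • (1 : Qd d) = 0 := by
        rw [← Finset.sum_smul, hA, zero_smul]
      have t2 : ∑ k ∈ g.coeff.support, g.coeff k • bQ d k = 0 := by
        simp only [bQ, Finset.smul_sum]
        rw [Finset.sum_comm]
        refine Finset.sum_eq_zero fun i _ => ?_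
        have : ∑ k ∈ g.coeff.support, g.coeff k • (k i) • eps d i =
            (∑ k ∈ g.coeff.support, g.coeff k * k i) • eps d i := by
          rw [Finset.sum_smul]
          exact Finset.sum_congr rfl fun k _ => by rw [smul_smul]
        rw [this, hB, zero_smul]
      have t3 : ∑ k ∈ g.coeff.support, g.coeff k • cQ d k =
          ∑ i : Fin d, m • (eps d i * eps d i) := by
        simp only [cQ, Finset.smul_sum]
        rw [Finset.sum_comm]
        have step : ∀ p ∈ Finset.univ ×ˢ (Finset.univ : Finset (Fin d)),
            ∑ k ∈ g.coeff.support, g.coeff k • hc p.1 p.2 k • (eps d p.1 * eps d p.2) =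
              (if p.1 = p.2 then m else 0) • (eps d p.1 * eps d p.2) := by
          rintro ⟨i, j⟩ -
          have : ∑ k ∈ g.coeff.support, g.coeff k • hc i j k • (eps d i * eps d j) =
              (∑ k ∈ g.coeff.support, g.coeff k * hc i j k) • (eps d i * eps d j) := by
            rw [Finset.sum_smul]
            exact Finset.sum_congr rfl fun k _ => by rw [smul_smul]
          rw [this]
          congr 1
          rcases eq_or_ne i j with rfl | hij
          · simp only [hc, if_pos rfl]
            exact hm i
          · simp only [hc, if_neg hij]
            rcases lt_or_gt_of_ne hij with h | h
            · simp only [if_pos h]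
              exact hC i j hij
            · simp only [if_neg (not_lt_of_gt h)]
              simp
        rw [Finset.sum_congr rfl step]
        rw [Finset.sum_product' (f := fun i j =>
          (if i = j then m else 0) • (eps d i * eps d j))]
        refine Finset.sum_congr rfl fun i _ => ?_
        rw [Finset.sum_eq_single i]
        · rw [if_pos rfl]
        · intro j _ hj
          rw [if_neg (Ne.symm hj), zero_smul]
        · intro h
          exact absurd (Finset.mem_univ i) h
      rw [t1, t2, t3, zero_add, zero_add]
    have hmem : g + m • fd d ∈ augIdeal d ^ 3 := by
      refine Ideal.Quotient.eq_zero_iff_mem.mp ?_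
      show pq d (g + m • fd d) = 0
      rw [map_add, map_zsmul, pq_fd, hg2, ← Finset.smul_sum]
      rw [smul_neg]
      exact add_neg_cancel _
    have hspan : (-m) • fd d ∈ Ideal.span {fd d} := by
      refine Ideal.mem_span_singleton'.mpr ⟨(-m : ℤ) • (1 : Rd d), ?_⟩
      rw [smul_mul_assoc, one_mul]
    have hgeq : g = (-m) • fd d + (g + m • fd d) := by
      rw [neg_smul]
      abel
    rw [hgeq, Submodule.add_eq_sup]
    exact Submodule.add_mem_sup hspan hmem
end

section
/- If g ∈ R_d satisfies Σ_k g_k = 0 (augmentation zero), and ω ∈ R^{Z^d} is defined by ω_0 = 0 and ω_n = (Σ_{i=1}^d n_i^4)/‖n‖^{d+4} for n ≠ 0 (Euclidean norm), then the convolution g·ω is absolutely summable, i.e., Σ_{n ∈ Z^d} |(g·ω)_n| < ∞. -/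
/-- The Euclidean norm of a lattice point `n ∈ ℤ^d`. -/
noncomputable def latticeEnorm {d : ℕ} (n : Fin d → ℤ) : ℝ :=
  Real.sqrt (∑ i, ((n i : ℝ)) ^ 2)

/-- The convolution `(g·ω)ₙ = ∑ₖ gₖ ω_{n-k}` of a finitely supported
`g : ℤ^d → ℤ` with `ω : ℤ^d → ℝ`. -/
noncomputable def conv {d : ℕ} (g : (Fin d → ℤ) →₀ ℤ) (ω : (Fin d → ℤ) → ℝ)
    (n : Fin d → ℤ) : ℝ :=
  ∑ k ∈ g.support, (g k : ℝ) * ω (n - k)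

open Finset

lemma summable_pi_prod {w : ℤ → ℝ} (h0 : ∀ m, 0 ≤ w m) (hw : Summable w) :
    ∀ d : ℕ, Summable (fun n : Fin d → ℤ => ∏ i, w (n i)) := by
  intro d
  induction d with
  | zero => exact (hasSum_fintype _).summable
  | succ d ih =>
    rw [← (Fin.consEquiv fun _ : Fin (d+1) => ℤ).summable_iff]
    have : ((fun n : Fin (d+1) → ℤ => ∏ i, w (n i)) ∘ (Fin.consEquiv fun _ => ℤ))
        = fun p : ℤ × (Fin d → ℤ) => w p.1 * ∏ i, w (p.2 i) := by
      funext p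
      simp [Fin.consEquiv, Fin.prod_univ_succ]
    rw [this]
    apply Summable.mul_of_nonneg hw ih
    · intro m; exact h0 m
    · intro n; exact Finset.prod_nonneg fun i _ => h0 _

lemma summable_w {q : ℝ} (hq : 1 < q) :
    Summable (fun m : ℤ => ((1 : ℝ) + |(m : ℝ)|) ^ (-q)) := by
  rw [← (Set.finite_singleton (0 : ℤ)).summable_compl_iff]
  have h := (Real.summable_abs_int_rpow hq).subtype ({(0:ℤ)}ᶜ : Set ℤ)
  refine h.of_nonneg_of_le (fun m => Real.rpow_nonneg (by positivity) _) fun m => ?_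
  have hm : m.1 ≠ 0 := m.2
  have h1 : (1 : ℝ) ≤ |(m.1 : ℝ)| := by
    rw [← Int.cast_abs]
    exact_mod_cast Int.one_le_abs (by exact_mod_cast hm)
  exact Real.rpow_le_rpow_of_nonpos (by linarith) (by linarith) (by linarith)

variable {d : ℕ}

private noncomputable def Ffun (d : ℕ) (x : EuclideanSpace ℝ (Fin d)) : ℝ :=
  (∑ i, x i ^ 4) * (∑ i, x i ^ 2) ^ (-((d : ℝ) + 4) / 2)

lemma coord_le_norm (x : EuclideanSpace ℝ (Fin d)) (i : Fin d) : |x i| ≤ ‖x‖ := by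
  rw [EuclideanSpace.norm_eq, ← Real.sqrt_sq_eq_abs]
  apply Real.sqrt_le_sqrt
  have : x i ^ 2 = ‖x i‖ ^ 2 := by rw [Real.norm_eq_abs, sq_abs]
  rw [this]
  exact Finset.single_le_sum (f := fun j => ‖x j‖ ^ 2) (fun j _ => by positivity) (mem_univ i)

lemma norm_proj_le (i : Fin d) : ‖(EuclideanSpace.proj i : EuclideanSpace ℝ (Fin d) →L[ℝ] ℝ)‖ ≤ 1 := by
  apply ContinuousLinearMap.opNorm_le_bound _ zero_le_one
  intro x
  rw [one_mul]
  simpa [Real.norm_eq_abs] using coord_le_norm x i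

lemma sum_sq_eq (x : EuclideanSpace ℝ (Fin d)) : ∑ i, x i ^ 2 = ‖x‖ ^ 2 := by
  rw [EuclideanSpace.norm_eq, Real.sq_sqrt (by positivity)]
  exact Finset.sum_congr rfl fun i _ => by rw [Real.norm_eq_abs, sq_abs]

set_option synthInstance.maxHeartbeats 1000000 in
set_option maxHeartbeats 1000000 in
lemma deriv_bound (hd : 1 ≤ d) {z : EuclideanSpace ℝ (Fin d)} (hz : 0 < ‖z‖) :
    HasFDerivAt (Ffun d) (fderiv ℝ (Ffun d) z) z ∧
    ‖fderiv ℝ (Ffun d) z‖ ≤ ((d : ℝ) ^ 2 * (d + 4) + 4 * d) * ‖z‖ ^ (-((d : ℝ) + 1)) := by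
  set p : ℝ := -((d : ℝ) + 4) / 2 with hp
  have hsz : (0 : ℝ) < ∑ i, z i ^ 2 := by rw [sum_sq_eq]; positivity
  -- derivative of u := ∑ x i ^ 4
  have hproj : ∀ i : Fin d, HasFDerivAt (fun y : EuclideanSpace ℝ (Fin d) => y i)
      (EuclideanSpace.proj i (𝕜 := ℝ)) z := fun i =>
    (EuclideanSpace.proj i (𝕜 := ℝ)).hasFDerivAt
  have hu : HasFDerivAt (fun x : EuclideanSpace ℝ (Fin d) => ∑ i, x i ^ 4)
      (∑ i : Fin d, ((4 : ℕ) * z i ^ 3 : ℝ) • (EuclideanSpace.proj i (𝕜 := ℝ))) z := by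
    apply HasFDerivAt.fun_sum
    intro i _
    exact (hasDerivAt_pow 4 (z i)).comp_hasFDerivAt z (hproj i)
  have hs : HasFDerivAt (fun x : EuclideanSpace ℝ (Fin d) => ∑ i, x i ^ 2)
      (∑ i : Fin d, ((2 : ℕ) * z i ^ 1 : ℝ) • (EuclideanSpace.proj i (𝕜 := ℝ))) z := by
    apply HasFDerivAt.fun_sum
    intro i _
    exact (hasDerivAt_pow 2 (z i)).comp_hasFDerivAt z (hproj i)
  have hv : HasFDerivAt (fun x : EuclideanSpace ℝ (Fin d) => (∑ i, x i ^ 2) ^ p)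
      ((p * (∑ i, z i ^ 2) ^ (p - 1)) • (∑ i : Fin d, ((2 : ℕ) * z i ^ 1 : ℝ) • (EuclideanSpace.proj i (𝕜 := ℝ)))) z :=
    hs.rpow_const (Or.inl hsz.ne')
  have hF : HasFDerivAt (Ffun d)
      ((∑ i, z i ^ 4) • ((p * (∑ i, z i ^ 2) ^ (p - 1)) • (∑ i : Fin d, ((2 : ℕ) * z i ^ 1 : ℝ) • (EuclideanSpace.proj i (𝕜 := ℝ))))
        + ((∑ i, z i ^ 2) ^ p) • (∑ i : Fin d, ((4 : ℕ) * z i ^ 3 : ℝ) • (EuclideanSpace.proj i (𝕜 := ℝ)))) z :=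
    hu.mul hv
  refine ⟨hF.fderiv ▸ hF, ?_⟩
  rw [hF.fderiv]
  set R := ‖z‖ with hR_def
  have hR : 0 < R := hz
  have habs : ∀ i, |z i| ≤ R := fun i => coord_le_norm z i
  have hA : ‖∑ i : Fin d, ((2 : ℕ) * z i ^ 1 : ℝ) • (EuclideanSpace.proj i (𝕜 := ℝ))‖
      ≤ 2 * d * R := by
    refine (norm_sum_le _ _).trans ?_
    have hterm : ∀ i ∈ (univ : Finset (Fin d)),
        ‖((2 : ℕ) * z i ^ 1 : ℝ) • (EuclideanSpace.proj i (𝕜 := ℝ))‖ ≤ 2 * R := by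
      intro i _
      refine (ContinuousLinearMap.opNorm_smul_le _ _).trans ?_
      rw [Real.norm_eq_abs]
      have h1 : |((2 : ℕ) : ℝ) * z i ^ 1| ≤ 2 * R := by
        rw [abs_mul, pow_one, Nat.abs_cast]
        push_cast
        exact mul_le_mul_of_nonneg_left (habs i) (by norm_num)
      calc |((2 : ℕ) : ℝ) * z i ^ 1| * ‖(EuclideanSpace.proj i (𝕜 := ℝ))‖
          ≤ (2 * R) * 1 := mul_le_mul h1 (norm_proj_le i) (norm_nonneg _) (by positivity)
        _ = 2 * R := mul_one _
    refine (Finset.sum_le_sum hterm).trans (le_of_eq ?_)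
    rw [Finset.sum_const, card_univ, Fintype.card_fin]
    push_cast; ring
  have hB : ‖∑ i : Fin d, ((4 : ℕ) * z i ^ 3 : ℝ) • (EuclideanSpace.proj i (𝕜 := ℝ))‖
      ≤ 4 * d * R ^ 3 := by
    refine (norm_sum_le _ _).trans ?_
    have hterm : ∀ i ∈ (univ : Finset (Fin d)),
        ‖((4 : ℕ) * z i ^ 3 : ℝ) • (EuclideanSpace.proj i (𝕜 := ℝ))‖ ≤ 4 * R ^ 3 := by
      intro i _
      refine (ContinuousLinearMap.opNorm_smul_le _ _).trans ?_
      rw [Real.norm_eq_abs]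
      have h1 : |((4 : ℕ) : ℝ) * z i ^ 3| ≤ 4 * R ^ 3 := by
        rw [abs_mul, abs_pow, Nat.abs_cast]
        push_cast
        exact mul_le_mul_of_nonneg_left
          (pow_le_pow_left₀ (abs_nonneg _) (habs i) 3) (by norm_num)
      calc |((4 : ℕ) : ℝ) * z i ^ 3| * ‖(EuclideanSpace.proj i (𝕜 := ℝ))‖
          ≤ (4 * R ^ 3) * 1 := mul_le_mul h1 (norm_proj_le i) (norm_nonneg _) (by positivity)
        _ = 4 * R ^ 3 := mul_one _
    refine (Finset.sum_le_sum hterm).trans (le_of_eq ?_)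
    rw [Finset.sum_const, card_univ, Fintype.card_fin]
    push_cast; ring
  have hu4 : |∑ i, z i ^ 4| ≤ d * R ^ 4 := by
    refine (Finset.abs_sum_le_sum_abs _ _).trans ?_
    have hterm : ∀ i ∈ (univ : Finset (Fin d)), |z i ^ 4| ≤ R ^ 4 := by
      intro i _
      rw [abs_pow]
      exact pow_le_pow_left₀ (abs_nonneg _) (habs i) 4
    refine (Finset.sum_le_sum hterm).trans (le_of_eq ?_)
    rw [Finset.sum_const, card_univ, Fintype.card_fin]
    push_cast; ring
  have hsq : (∑ i, z i ^ 2) = R ^ 2 := sum_sq_eq z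
  have hsp1 : (∑ i, z i ^ 2) ^ (p - 1) = R ^ (2 * (p - 1)) := by
    rw [hsq, ← Real.rpow_natCast R 2, ← Real.rpow_mul hR.le]
    norm_num
  have hsp2 : (∑ i, z i ^ 2) ^ p = R ^ (2 * p) := by
    rw [hsq, ← Real.rpow_natCast R 2, ← Real.rpow_mul hR.le]
    norm_num
  have habsp : |p| = ((d : ℝ) + 4) / 2 := by
    rw [hp, abs_div, abs_neg, abs_of_nonneg (by positivity : (0:ℝ) ≤ (d:ℝ) + 4),
      abs_of_nonneg (by norm_num : (0:ℝ) ≤ (2:ℝ))]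
  refine (norm_add_le _ _).trans ?_
  have hT1 : ‖(∑ i, z i ^ 4) • ((p * (∑ i, z i ^ 2) ^ (p - 1)) •
      (∑ i : Fin d, ((2 : ℕ) * z i ^ 1 : ℝ) • (EuclideanSpace.proj i (𝕜 := ℝ))))‖
      ≤ (d * R ^ 4) * ((|p| * R ^ (2 * (p - 1))) * (2 * d * R)) := by
    refine (ContinuousLinearMap.opNorm_smul_le _ _).trans ?_
    refine (mul_le_mul_of_nonneg_left (ContinuousLinearMap.opNorm_smul_le _ _) (norm_nonneg _)).trans ?_
    rw [Real.norm_eq_abs, Real.norm_eq_abs, abs_mul,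
      abs_of_nonneg (Real.rpow_nonneg (by positivity : (0:ℝ) ≤ ∑ i, z i ^ 2) _), hsp1]
    gcongr
    all_goals first | exact hu4 | exact hA | positivity
  have hT2 : ‖((∑ i, z i ^ 2) ^ p) •
      (∑ i : Fin d, ((4 : ℕ) * z i ^ 3 : ℝ) • (EuclideanSpace.proj i (𝕜 := ℝ)))‖
      ≤ R ^ (2 * p) * (4 * d * R ^ 3) := by
    refine (ContinuousLinearMap.opNorm_smul_le _ _).trans ?_
    rw [Real.norm_eq_abs,
      abs_of_nonneg (Real.rpow_nonneg (by positivity : (0:ℝ) ≤ ∑ i, z i ^ 2) _), hsp2]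
    gcongr
    all_goals first | exact hB | exact Real.rpow_nonneg hR.le _ | positivity
  refine (add_le_add hT1 hT2).trans (le_of_eq ?_)
  have e1 : R ^ (4:ℕ) * R ^ (2 * (p - 1)) * R = R ^ (-((d:ℝ) + 1)) := by
    rw [← Real.rpow_natCast R 4]
    nth_rewrite 3 [← Real.rpow_one R]
    rw [← Real.rpow_add hR, ← Real.rpow_add hR]
    congr 1
    rw [hp]; push_cast; ring
  have e2 : R ^ (2 * p) * R ^ (3:ℕ) = R ^ (-((d:ℝ) + 1)) := by
    rw [← Real.rpow_natCast R 3, ← Real.rpow_add hR]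
    congr 1
    rw [hp]; push_cast; ring
  calc (d * R ^ 4) * ((|p| * R ^ (2 * (p - 1))) * (2 * d * R)) + R ^ (2 * p) * (4 * d * R ^ 3)
      = (2 * d ^ 2 * |p|) * (R ^ (4:ℕ) * R ^ (2 * (p - 1)) * R)
        + (4 * d) * (R ^ (2 * p) * R ^ (3:ℕ)) := by ring
    _ = (2 * d ^ 2 * (((d : ℝ) + 4) / 2)) * R ^ (-((d:ℝ) + 1))
        + (4 * d) * R ^ (-((d:ℝ) + 1)) := by rw [e1, e2, habsp]
    _ = ((d : ℝ) ^ 2 * (d + 4) + 4 * d) * R ^ (-((d:ℝ) + 1)) := by ring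

private noncomputable def Cd (d : ℕ) : ℝ := ((d:ℝ)^2*((d:ℝ)+4) + 4*(d:ℝ)) * 2 ^ ((d:ℝ)+1)

lemma Cd_pos (d : ℕ) (hd : 1 ≤ d) : 0 < Cd d := by
  have : (1:ℝ) ≤ (d:ℝ) := by exact_mod_cast hd
  have h2 : (0:ℝ) < 2 ^ ((d:ℝ)+1) := Real.rpow_pos_of_pos (by norm_num) _
  have : (0:ℝ) < (d:ℝ)^2*((d:ℝ)+4) + 4*(d:ℝ) := by nlinarith
  exact mul_pos this h2

lemma Ffun_diff_bound (hd : 1 ≤ d) (x y : EuclideanSpace ℝ (Fin d))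
    (hx : 1 ≤ ‖x‖) (hxy : ‖y - x‖ ≤ ‖x‖ / 2) :
    |Ffun d y - Ffun d x| ≤ Cd d * ‖x‖ ^ (-((d:ℝ)+1)) * ‖y - x‖ := by
  have hxpos : (0:ℝ) < ‖x‖ := lt_of_lt_of_le one_pos hx
  set C0 : ℝ := (d:ℝ)^2*((d:ℝ)+4) + 4*(d:ℝ) with hC0
  have hseg : ∀ z ∈ segment ℝ x y, ‖x‖ / 2 ≤ ‖z‖ := by
    rintro z ⟨a, b, ha, hb, hab, rfl⟩
    have h1 : a • x + b • y - x = b • (y - x) := by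
      have hba : a = 1 - b := by linarith
      rw [hba, sub_smul, one_smul, smul_sub]
      abel
    have h2 : ‖a • x + b • y - x‖ ≤ ‖y - x‖ := by
      rw [h1, norm_smul, Real.norm_eq_abs, abs_of_nonneg hb]
      calc b * ‖y - x‖ ≤ 1 * ‖y - x‖ :=
            mul_le_mul_of_nonneg_right (by linarith) (norm_nonneg _)
        _ = ‖y - x‖ := one_mul _
    have h3 : ‖x‖ - ‖a • x + b • y‖ ≤ ‖x - (a • x + b • y)‖ := norm_sub_norm_le _ _
    rw [norm_sub_rev] at h3
    linarith
  have hpos : ∀ z ∈ segment ℝ x y, (0:ℝ) < ‖z‖ := fun z hz =>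
    lt_of_lt_of_le (by linarith) (hseg z hz)
  have key : ‖Ffun d y - Ffun d x‖ ≤ (C0 * (‖x‖/2) ^ (-((d:ℝ)+1))) * ‖y - x‖ := by
    refine Convex.norm_image_sub_le_of_norm_hasFDerivWithin_le
      (f' := fun z => fderiv ℝ (Ffun d) z)
      (fun z hz => ((deriv_bound hd (hpos z hz)).1).hasFDerivWithinAt)
      (fun z hz => ?_) (convex_segment x y)
      (left_mem_segment ℝ x y) (right_mem_segment ℝ x y)
    refine (deriv_bound hd (hpos z hz)).2.trans ?_
    have : ‖z‖ ^ (-((d:ℝ)+1)) ≤ (‖x‖/2) ^ (-((d:ℝ)+1)) :=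
      Real.rpow_le_rpow_of_nonpos (by linarith) (hseg z hz) (neg_nonpos.mpr (by positivity))
    have hC0pos : (0:ℝ) ≤ C0 := by
      have h1 : (1:ℝ) ≤ (d:ℝ) := by exact_mod_cast hd
      nlinarith
    exact mul_le_mul_of_nonneg_left this hC0pos
  have hdiv : (‖x‖/2) ^ (-((d:ℝ)+1)) = ‖x‖ ^ (-((d:ℝ)+1)) * 2 ^ ((d:ℝ)+1) := by
    rw [Real.div_rpow (norm_nonneg x) (by norm_num : (0:ℝ) ≤ 2), div_eq_mul_inv,
      ← Real.rpow_neg (by norm_num : (0:ℝ) ≤ 2), neg_neg]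
  rw [Real.norm_eq_abs] at key
  refine key.trans (le_of_eq ?_)
  rw [hdiv, Cd]
  ring

noncomputable def latt {d : ℕ} (n : Fin d → ℤ) : EuclideanSpace ℝ (Fin d) := WithLp.toLp 2 (fun i => (n i : ℝ))

lemma enorm_eq_latt (n : Fin d → ℤ) : latticeEnorm n = ‖latt n‖ := by
  rw [EuclideanSpace.norm_eq, latticeEnorm]
  congr 1
  exact Finset.sum_congr rfl fun i _ => by rw [Real.norm_eq_abs, sq_abs]; rfl

lemma latt_sub (n k : Fin d → ℤ) : latt (n - k) = latt n - latt k := by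
  ext i
  show ((n - k) i : ℝ) = (n i : ℝ) - (k i : ℝ)
  rw [Pi.sub_apply]; push_cast; ring

lemma one_le_norm_latt {n : Fin d → ℤ} (hn : n ≠ 0) : 1 ≤ ‖latt n‖ := by
  obtain ⟨i, hi⟩ := Function.ne_iff.mp hn
  have h1 : (1:ℝ) ≤ |latt n i| := by
    show (1:ℝ) ≤ |(n i : ℝ)|
    rw [← Int.cast_abs]
    exact_mod_cast Int.one_le_abs hi
  exact h1.trans (coord_le_norm (latt n) i)

lemma omega_eq_Ffun {n : Fin d → ℤ} (hn : n ≠ 0) :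
    (∑ i, ((n i : ℝ)) ^ 4) / latticeEnorm n ^ (d + 4) = Ffun d (latt n) := by
  have hpos : (0:ℝ) < ‖latt n‖ := lt_of_lt_of_le one_pos (one_le_norm_latt hn)
  rw [enorm_eq_latt, Ffun, div_eq_mul_inv]
  have h4 : ∑ i, (latt n i) ^ 4 = ∑ i, ((n i : ℝ)) ^ 4 := rfl
  rw [h4]
  congr 1
  rw [sum_sq_eq, ← Real.rpow_natCast ‖latt n‖ 2, ← Real.rpow_mul hpos.le,
    ← Real.rpow_natCast ‖latt n‖ (d + 4), ← Real.rpow_neg hpos.le]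
  congr 1
  push_cast; ring

lemma norm_le_prod_bound {n : Fin d → ℤ} (hd : 1 ≤ d) (hn : 1 ≤ ‖latt n‖) :
    ‖latt n‖ ^ (-((d:ℝ)+1)) ≤
      2 ^ ((d:ℝ)+1) * ∏ i, ((1:ℝ) + |(n i : ℝ)|) ^ (-(((d:ℝ)+1)/(d:ℝ))) := by
  set q : ℝ := ((d:ℝ)+1)/(d:ℝ) with hq
  have hdpos : (0:ℝ) < (d:ℝ) := by exact_mod_cast hd
  have hxpos : (0:ℝ) < ‖latt n‖ := lt_of_lt_of_le one_pos hn
  have hterm : ∀ i, (0:ℝ) < 1 + |(n i : ℝ)| := fun i => by positivity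
  have hprod_pos : (0:ℝ) < ∏ i, ((1:ℝ) + |(n i : ℝ)|) :=
    Finset.prod_pos fun i _ => hterm i
  have h1 : ∏ i, ((1:ℝ) + |(n i : ℝ)|) ≤ (2 * ‖latt n‖) ^ (d:ℕ) := by
    calc ∏ i, ((1:ℝ) + |(n i : ℝ)|) ≤ ∏ _i : Fin d, 2 * ‖latt n‖ := by
          refine Finset.prod_le_prod (fun i _ => (hterm i).le) fun i _ => ?_
          have := coord_le_norm (latt n) i
          show (1:ℝ) + |(n i : ℝ)| ≤ 2 * ‖latt n‖
          have h2 : |(n i : ℝ)| = |latt n i| := rfl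
          rw [h2]
          linarith
      _ = (2 * ‖latt n‖) ^ (d:ℕ) := by
          rw [Finset.prod_const, card_univ, Fintype.card_fin]
  have h2 : ∏ i, ((1:ℝ) + |(n i : ℝ)|) ^ (-q) = (∏ i, ((1:ℝ) + |(n i : ℝ)|)) ^ (-q) :=
    Real.finset_prod_rpow _ _ (fun i _ => (hterm i).le) _
  have h3 : ((2 * ‖latt n‖) ^ (d:ℕ) : ℝ) ^ (-q) ≤ (∏ i, ((1:ℝ) + |(n i : ℝ)|)) ^ (-q) :=
    Real.rpow_le_rpow_of_nonpos hprod_pos h1 (neg_nonpos.mpr (by positivity))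
  have h4 : ((2 * ‖latt n‖) ^ (d:ℕ) : ℝ) ^ (-q) = (2:ℝ) ^ (-((d:ℝ)+1)) * ‖latt n‖ ^ (-((d:ℝ)+1)) := by
    rw [← Real.rpow_natCast (2 * ‖latt n‖) d, ← Real.rpow_mul (by positivity)]
    have he : (d:ℝ) * (-q) = -((d:ℝ)+1) := by rw [hq]; field_simp
    rw [he, Real.mul_rpow (by norm_num) hxpos.le]
  have h5 : ‖latt n‖ ^ (-((d:ℝ)+1)) =
      2 ^ ((d:ℝ)+1) * ((2:ℝ) ^ (-((d:ℝ)+1)) * ‖latt n‖ ^ (-((d:ℝ)+1))) := by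
    rw [← mul_assoc, ← Real.rpow_add (by norm_num : (0:ℝ) < 2)]
    have h0 : ((d:ℝ)+1) + (-((d:ℝ)+1)) = 0 := by ring
    rw [h0, Real.rpow_zero, one_mul]
  rw [h5, h2]
  have h6 : (0:ℝ) < 2 ^ ((d:ℝ)+1) := Real.rpow_pos_of_pos (by norm_num) _
  refine mul_le_mul_of_nonneg_left ?_ h6.le
  rw [← h4]
  exact h3

lemma finite_ball (d : ℕ) (B : ℝ) : {n : Fin d → ℤ | ‖latt n‖ ≤ B}.Finite := by
  have hsub : {n : Fin d → ℤ | ‖latt n‖ ≤ B} ⊆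
      Set.univ.pi fun _i : Fin d => (Set.Icc (-⌈B⌉) ⌈B⌉ : Set ℤ) := by
    intro n hn
    rw [Set.mem_univ_pi]
    intro i
    have h1 : |(n i : ℝ)| ≤ B := by
      have h2 : |(n i : ℝ)| = |latt n i| := rfl
      rw [h2]
      exact (coord_le_norm (latt n) i).trans hn
    constructor
    · have : -(⌈B⌉ : ℝ) ≤ (n i : ℝ) := by
        have := neg_abs_le ((n i : ℝ))
        have hB := Int.le_ceil B
        linarith
      exact_mod_cast this
    · have h : (n i : ℝ) ≤ (⌈B⌉ : ℝ) := by
        have := le_abs_self ((n i : ℝ))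
        have hB := Int.le_ceil B
        linarith
      exact_mod_cast h
  exact Set.Finite.subset (Set.Finite.pi fun i => Set.finite_Icc _ _) hsub

/-- If `g` has augmentation zero and `ωₙ = (∑ᵢ nᵢ⁴)/‖n‖^{d+4}` (with `ω₀ = 0`),
then `g·ω` is absolutely summable over `ℤ^d`. -/
theorem stmt3 (d : ℕ) (hd : 2 ≤ d) (g : (Fin d → ℤ) →₀ ℤ)
    (hA : ∑ k ∈ g.support, g k = 0) :
    Summable (fun n : Fin d → ℤ =>
      |conv g (fun m => if m = 0 then 0
        else (∑ i, ((m i : ℝ)) ^ 4) / latticeEnorm m ^ (d + 4)) n|) := by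
  have hd1 : 1 ≤ d := le_trans one_le_two hd
  set q : ℝ := ((d:ℝ)+1)/(d:ℝ) with hq
  have hdpos : (0:ℝ) < (d:ℝ) := by exact_mod_cast hd1
  have hq1 : 1 < q := by
    rw [hq, lt_div_iff₀ hdpos]
    linarith
  set ω : (Fin d → ℤ) → ℝ := fun m => if m = 0 then 0
    else (∑ i, ((m i : ℝ)) ^ 4) / latticeEnorm m ^ (d + 4) with hω
  set w : ℤ → ℝ := fun m => ((1 : ℝ) + |(m : ℝ)|) ^ (-q) with hw
  have hw0 : ∀ m, 0 ≤ w m := fun m => Real.rpow_nonneg (by positivity) _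
  have hwsum : Summable w := summable_w hq1
  set K : ℝ := ∑ k ∈ g.support, |(g k : ℝ)| * ‖latt k‖ with hK
  have hK0 : 0 ≤ K := Finset.sum_nonneg fun k _ => by positivity
  set R : ℝ := ∑ k ∈ g.support, ‖latt k‖ with hR
  have hR0 : 0 ≤ R := Finset.sum_nonneg fun k _ => norm_nonneg _
  have hRk : ∀ k ∈ g.support, ‖latt k‖ ≤ R :=
    fun k hk => Finset.single_le_sum (fun j _ => norm_nonneg (latt j)) hk
  have hfin : {n : Fin d → ℤ | ‖latt n‖ ≤ 2*R + 2}.Finite := finite_ball d _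
  rw [← hfin.summable_compl_iff]
  set Cc : ℝ := Cd d * K * 2 ^ ((d:ℝ)+1) with hCc
  have hCd0 : 0 < Cd d := Cd_pos d hd1
  have hsummaj : Summable (fun n : Fin d → ℤ => Cc * ∏ i, w (n i)) :=
    (summable_pi_prod hw0 hwsum d).mul_left Cc
  refine Summable.of_nonneg_of_le (fun n => abs_nonneg _)
    (fun n => ?_) (hsummaj.subtype _)
  -- the pointwise bound, for n outside the bad set
  obtain ⟨n, hn⟩ := n
  simp only [Set.mem_compl_iff, Set.mem_setOf_eq, not_le] at hn
  show |conv g ω n| ≤ Cc * ∏ i, w (n i)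
  have hn1 : 1 ≤ ‖latt n‖ := by linarith
  have hnhalf : ∀ k ∈ g.support, ‖latt k‖ ≤ ‖latt n‖ / 2 := by
    intro k hk
    have := hRk k hk
    linarith
  have hnne : n ≠ 0 := by
    intro h
    rw [h] at hn
    have : latt (0 : Fin d → ℤ) = 0 := by
      ext i
      show ((0:ℤ):ℝ) = 0
      norm_num
    rw [this, norm_zero] at hn
    linarith
  have hnkne : ∀ k ∈ g.support, n - k ≠ 0 := by
    intro k hk h
    have hnk : n = k := by
      have := sub_eq_zero.mp h
      exact this
    rw [hnk] at hn
    have := hRk k hk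
    linarith
  have hconv : conv g ω n
      = ∑ k ∈ g.support, (g k : ℝ) * (Ffun d (latt n - latt k) - Ffun d (latt n)) := by
    have hzero : (∑ k ∈ g.support, (g k : ℝ)) = 0 := by exact_mod_cast hA
    have hterm : ∀ k ∈ g.support, (g k : ℝ) * ω (n - k) = (g k : ℝ) * Ffun d (latt n - latt k) := by
      intro k hk
      rw [hω]
      simp only [if_neg (hnkne k hk)]
      rw [omega_eq_Ffun (hnkne k hk), latt_sub]
    rw [conv, Finset.sum_congr rfl hterm]
    simp only [mul_sub]
    rw [Finset.sum_sub_distrib, ← Finset.sum_mul, hzero, zero_mul, sub_zero]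
  rw [hconv]
  have hbound : ∀ k ∈ g.support,
      |(g k : ℝ) * (Ffun d (latt n - latt k) - Ffun d (latt n))|
        ≤ |(g k : ℝ)| * (Cd d * ‖latt n‖ ^ (-((d:ℝ)+1)) * ‖latt k‖) := by
    intro k hk
    rw [abs_mul]
    refine mul_le_mul_of_nonneg_left ?_ (abs_nonneg _)
    have hyx : ‖(latt n - latt k) - latt n‖ = ‖latt k‖ := by
      rw [show (latt n - latt k) - latt n = -(latt k) by abel, norm_neg]
    have := Ffun_diff_bound hd1 (latt n) (latt n - latt k) hn1
      (by rw [hyx]; exact hnhalf k hk)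
    rw [hyx] at this
    exact this
  calc |∑ k ∈ g.support, (g k : ℝ) * (Ffun d (latt n - latt k) - Ffun d (latt n))|
      ≤ ∑ k ∈ g.support, |(g k : ℝ) * (Ffun d (latt n - latt k) - Ffun d (latt n))| :=
        Finset.abs_sum_le_sum_abs _ _
    _ ≤ ∑ k ∈ g.support, |(g k : ℝ)| * (Cd d * ‖latt n‖ ^ (-((d:ℝ)+1)) * ‖latt k‖) :=
        Finset.sum_le_sum hbound
    _ = Cd d * ‖latt n‖ ^ (-((d:ℝ)+1)) * K := by
        rw [hK, Finset.mul_sum]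
        exact Finset.sum_congr rfl fun k _ => by ring
    _ ≤ Cd d * (2 ^ ((d:ℝ)+1) * ∏ i, w (n i)) * K := by
        refine mul_le_mul_of_nonneg_right ?_ hK0
        exact mul_le_mul_of_nonneg_left (norm_le_prod_bound hd1 hn1) hCd0.le
    _ = Cc * ∏ i, w (n i) := by rw [hCc]; ring
end

section
/- Let d ≥ 2 and γ ≥ 2d. If v, v' are recurrent configurations in R_∞^(γ) ⊂ {0,...,γ-1}^{Z^d} and v - v' is a nonzero finitely supported integer function, then v - v' does not lie in f^(d,γ)·R_d, where f^(d,γ) = γ - Σ_{i=1}^d (u_i + u_i^{-1}). -/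
/-- The number of lattice neighbours of `n` inside the finite set `F`. -/
def NN {d : ℕ} (F : Finset (Fin d → ℤ)) (n : Fin d → ℤ) : ℕ :=
  (F.filter fun m => ∃ i : Fin d,
    m = n + Pi.single i 1 ∨ m = n - Pi.single i 1).card

/-- `v` takes values in `{0,…,γ-1}`. -/
def InRange {d : ℕ} (γ : ℤ) (v : (Fin d → ℤ) → ℤ) : Prop :=
  ∀ n, 0 ≤ v n ∧ v n ≤ γ - 1

/-- The burning test: the restriction of `v` to every nonempty finite
`F ⊂ ℤ^d` lies in `P_F^(γ)`, i.e. has a site `n ∈ F` with `v n ≥ N_F(n)`. -/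
def BurningOK {d : ℕ} (v : (Fin d → ℤ) → ℤ) : Prop :=
  ∀ F : Finset (Fin d → ℤ), F.Nonempty → ∃ n ∈ F, (NN F n : ℤ) ≤ v n

/-- `v` is an (infinite-volume) recurrent configuration: `v ∈ R_∞^(γ)`. -/
def Recurrent {d : ℕ} (γ : ℤ) (v : (Fin d → ℤ) → ℤ) : Prop :=
  InRange γ v ∧ BurningOK v

/-- The Laurent polynomial `f^(d,γ) = γ - ∑ᵢ (uᵢ + uᵢ⁻¹)`, as an element of the
group algebra `ℤ[ℤ^d]` (finitely supported functions with convolution). -/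
noncomputable def fdg (d : ℕ) (γ : ℤ) : AddMonoidAlgebra ℤ (Fin d → ℤ) :=
  AddMonoidAlgebra.single 0 γ - ∑ i : Fin d,
    (AddMonoidAlgebra.single (Pi.single i 1) 1 +
     AddMonoidAlgebra.single (-Pi.single i 1) 1)

lemma single_ne_single {d : ℕ} {i j : Fin d} (hij : i ≠ j) :
    (Pi.single i 1 : Fin d → ℤ) ≠ Pi.single j 1 := by
  intro hc
  have := congrFun hc i
  simp [Pi.single_apply, hij.symm] at this

lemma single_ne_neg_single {d : ℕ} (i j : Fin d) :
    (Pi.single i 1 : Fin d → ℤ) ≠ -Pi.single j 1 := by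
  intro hc
  have := congrFun hc i
  simp only [Pi.single_apply, Pi.neg_apply] at this
  by_cases h : j = i <;> simp [h] at this <;> omega

lemma NN_eq {d : ℕ} (S : Finset (Fin d → ℤ)) (n : Fin d → ℤ) :
    NN S n = ∑ i : Fin d,
      ((if n + Pi.single i 1 ∈ S then 1 else 0) +
       (if n - Pi.single i 1 ∈ S then 1 else 0)) := by
  classical
  unfold NN
  have hset : (S.filter fun m => ∃ i : Fin d,
      m = n + Pi.single i 1 ∨ m = n - Pi.single i 1)
      = Finset.univ.biUnion (fun i : Fin d =>
        ({n + Pi.single i 1, n - Pi.single i 1} : Finset (Fin d → ℤ)).filter (· ∈ S)) := by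
    ext m
    simp only [Finset.mem_filter, Finset.mem_biUnion, Finset.mem_univ, true_and,
      Finset.mem_insert, Finset.mem_singleton]
    aesop
  rw [hset, Finset.card_biUnion]
  · refine Finset.sum_congr rfl fun i _ => ?_
    have hne : n + Pi.single i 1 ≠ n - Pi.single i 1 := by
      intro hc
      rw [sub_eq_add_neg] at hc
      exact single_ne_neg_single i i (add_left_cancel hc)
    rw [Finset.card_filter, Finset.sum_pair hne]
  · intro i _ j _ hij
    apply Finset.disjoint_filter_filter
    rw [Finset.disjoint_left]
    intro m hm hm'
    simp only [Finset.mem_insert, Finset.mem_singleton] at hm hm'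
    rcases hm with rfl | rfl <;> rcases hm' with h' | h'
    · exact single_ne_single hij (add_left_cancel h')
    · rw [sub_eq_add_neg] at h'
      exact single_ne_neg_single i j (add_left_cancel h')
    · rw [sub_eq_add_neg] at h'
      exact single_ne_neg_single j i (add_left_cancel h'.symm)
    · rw [sub_eq_add_neg, sub_eq_add_neg] at h'
      exact single_ne_single hij (neg_injective (add_left_cancel h'))

lemma fdg_mul_apply {d : ℕ} (γ : ℤ) (g : AddMonoidAlgebra ℤ (Fin d → ℤ)) (n : Fin d → ℤ) :
    (fdg d γ * g).coeff n = γ * g.coeff n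
      - ∑ i : Fin d, (g.coeff (n - Pi.single i 1) + g.coeff (n + Pi.single i 1)) := by
  unfold fdg
  rw [sub_mul, Finset.sum_mul, AddMonoidAlgebra.coeff_sub, Finsupp.sub_apply]
  congr 1
  · rw [AddMonoidAlgebra.coeff_single_mul_apply]
    simp
  · rw [AddMonoidAlgebra.coeff_sum, Finset.sum_apply']
    refine Finset.sum_congr rfl fun i _ => ?_
    rw [add_mul, AddMonoidAlgebra.coeff_add, Finsupp.add_apply, AddMonoidAlgebra.coeff_single_mul_apply,
      AddMonoidAlgebra.coeff_single_mul_apply]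
    rw [one_mul, one_mul, neg_neg, ← sub_eq_neg_add, add_comm (Pi.single i 1) n]

lemma core {d : ℕ} (γ : ℤ) (hγ : 2 * (d : ℤ) ≤ γ)
    (v v' : (Fin d → ℤ) → ℤ)
    (hv : Recurrent γ v) (hv' : Recurrent γ v')
    (g : AddMonoidAlgebra ℤ (Fin d → ℤ))
    (hdiff : ∀ n, v n - v' n = (fdg d γ * g).coeff n)
    (n0 : Fin d → ℤ) (hpos : 0 < g.coeff n0) : False := by
  classical
  have hn0 : n0 ∈ g.coeff.support := Finsupp.mem_support_iff.mpr (ne_of_gt hpos)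
  have hsupne : g.coeff.support.Nonempty := ⟨n0, hn0⟩
  set M : ℤ := g.coeff.support.sup' hsupne g.coeff with hM
  have hMpos : 0 < M := lt_of_lt_of_le hpos (Finset.le_sup' g.coeff hn0)
  have hle : ∀ m, g.coeff m ≤ M := by
    intro m
    by_cases hm : m ∈ g.coeff.support
    · exact Finset.le_sup' g.coeff hm
    · rw [Finsupp.notMem_support_iff.mp hm]; exact le_of_lt hMpos
  set S : Finset (Fin d → ℤ) := g.coeff.support.filter (fun m => g.coeff m = M) with hS
  have hSne : S.Nonempty := by
    obtain ⟨m, hm, hm'⟩ := Finset.exists_mem_eq_sup' hsupne g.coeff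
    exact ⟨m, Finset.mem_filter.mpr ⟨hm, hm'.symm⟩⟩
  obtain ⟨n, hnS, hburn⟩ := hv'.2 S hSne
  have hgn : g.coeff n = M := (Finset.mem_filter.mp hnS).2
  -- key bound on each value
  have hbound : ∀ m, g.coeff m ≤ M - 1 + (if m ∈ S then 1 else 0) := by
    intro m
    by_cases hm : m ∈ S
    · simp [hm, (Finset.mem_filter.mp hm).2]
    · simp only [hm, if_neg, if_false, add_zero]
      have : g.coeff m ≠ M := by
        intro hc
        exact hm (Finset.mem_filter.mpr
          ⟨Finsupp.mem_support_iff.mpr (hc ▸ ne_of_gt hMpos), hc⟩)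
      have := lt_of_le_of_ne (hle m) this
      omega
  have hNN : (NN S n : ℤ) = ∑ i : Fin d,
      ((if n + Pi.single i 1 ∈ S then (1:ℤ) else 0) +
       (if n - Pi.single i 1 ∈ S then 1 else 0)) := by
    rw [NN_eq]
    push_cast
    rfl
  have hsum : ∑ i : Fin d, (g.coeff (n - Pi.single i 1) + g.coeff (n + Pi.single i 1))
      ≤ (d : ℤ) * (2 * (M - 1)) + (NN S n : ℤ) := by
    rw [hNN]
    calc ∑ i : Fin d, (g.coeff (n - Pi.single i 1) + g.coeff (n + Pi.single i 1))
        ≤ ∑ i : Fin d, (2 * (M - 1) +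
            ((if n + Pi.single i 1 ∈ S then (1:ℤ) else 0) +
             (if n - Pi.single i 1 ∈ S then 1 else 0))) := by
          refine Finset.sum_le_sum fun i _ => ?_
          have h1 := hbound (n - Pi.single i 1)
          have h2 := hbound (n + Pi.single i 1)
          omega
      _ = (d : ℤ) * (2 * (M - 1)) + ∑ i : Fin d,
            ((if n + Pi.single i 1 ∈ S then (1:ℤ) else 0) +
             (if n - Pi.single i 1 ∈ S then 1 else 0)) := by
          rw [Finset.sum_add_distrib, Finset.sum_const, Finset.card_univ,
            Fintype.card_fin, nsmul_eq_mul]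
  have hdiffn : v n - v' n = γ * M
      - ∑ i : Fin d, (g.coeff (n - Pi.single i 1) + g.coeff (n + Pi.single i 1)) := by
    rw [hdiff n, fdg_mul_apply, hgn]
  have hvn : γ ≤ v n := by
    have h1 : γ - (NN S n : ℤ) ≤ v n - v' n := by
      rw [hdiffn]
      have : (γ - 2 * d) * 1 ≤ (γ - 2 * d) * M :=
        mul_le_mul_of_nonneg_left hMpos (by omega)
      nlinarith [hsum]
    omega
  have := (hv.1 n).2
  omega

/-- If `v, v'` are recurrent configurations and `v - v'` is a nonzero finitely
supported integer function `h`, then `h ∉ f^(d,γ)·R_d`. -/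
theorem stmt13 (d : ℕ) (hd : 2 ≤ d) (γ : ℤ) (hγ : 2 * (d : ℤ) ≤ γ)
    (v v' : (Fin d → ℤ) → ℤ)
    (hv : Recurrent γ v) (hv' : Recurrent γ v')
    (h : AddMonoidAlgebra ℤ (Fin d → ℤ))
    (hdiff : ∀ n, v n - v' n = h.coeff n) (hne : h ≠ 0) :
    h ∉ Ideal.span {fdg d γ} := by
  intro hmem
  rw [Ideal.mem_span_singleton] at hmem
  obtain ⟨c, hc⟩ := hmem
  have hcne : c ≠ 0 := by rintro rfl; simp at hc; exact hne hc
  obtain ⟨n0, hn0⟩ : ∃ n0, c.coeff n0 ≠ 0 := by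
    by_contra hcon
    push_neg at hcon
    exact hcne (AddMonoidAlgebra.coeff_injective (Finsupp.ext hcon))
  rcases lt_or_gt_of_ne hn0 with hneg | hpos
  · refine core γ hγ v' v hv' hv (-c) (fun n => ?_) n0 (by rw [AddMonoidAlgebra.coeff_neg, Finsupp.neg_apply]; omega)
    rw [mul_neg, AddMonoidAlgebra.coeff_neg, Finsupp.neg_apply, ← hc, ← hdiff n]
    ring
  · exact core γ hγ v v' hv hv' c (fun n => by rw [hdiff n, hc]) n0 hpos
end

section
/- Let d ≥ 2, γ ≥ 2d, v ∈ R_∞^(γ), and h ∈ ℓ^∞(Z^d, Z) with M = max_m h_m > 0 such that v + f^(d,γ)·h ∈ R_∞^(γ). Then every connected component (with respect to the max-norm adjacency graph on Z^d) of the set S_max(h) = {n ∈ Z^d : h_n = M} is infinite. -/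
/-- The convolution action of `f^(d,γ) = γ - ∑ᵢ(uᵢ+uᵢ⁻¹)` on integer-valued
configurations. -/
def fdConv {d : ℕ} (γ : ℤ) (h : (Fin d → ℤ) → ℤ) (n : Fin d → ℤ) : ℤ :=
  γ * h n - ∑ i : Fin d, (h (n + Pi.single i 1) + h (n - Pi.single i 1))

/-- Max-norm adjacency on `ℤ^d`: `‖m - n‖_max = 1`. -/
def Adj {d : ℕ} (m n : Fin d → ℤ) : Prop :=
  m ≠ n ∧ ∀ i, |m i - n i| ≤ 1

/-- If `v ∈ R_∞^(γ)`, `h ∈ ℓ^∞(ℤ^d,ℤ)` has maximum `M > 0`, and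
`v + f^(d,γ)·h ∈ R_∞^(γ)`, then every connected component of
`S_max(h) = {n : h n = M}` is infinite. -/
theorem stmt14 (d : ℕ) (hd : 2 ≤ d) (γ : ℤ) (hγ : 2 * (d : ℤ) ≤ γ)
    (v : (Fin d → ℤ) → ℤ) (hv : Recurrent γ v)
    (h : (Fin d → ℤ) → ℤ) (hbdd : ∃ B : ℤ, ∀ n, |h n| ≤ B)
    (M : ℤ) (hM : 0 < M) (hub : ∀ n, h n ≤ M) (hatt : ∃ n, h n = M)
    (hv' : Recurrent γ (fun n => v n + fdConv γ h n)) :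
    ∀ a : Fin d → ℤ, h a = M →
      {b : Fin d → ℤ | Relation.ReflTransGen
        (fun x y => h x = M ∧ h y = M ∧ Adj x y) a b}.Infinite := by
  classical
  intro a ha
  by_contra hinf
  rw [Set.not_infinite] at hinf
  set R := fun x y : Fin d → ℤ => h x = M ∧ h y = M ∧ Adj x y with hRdef
  let F : Finset (Fin d → ℤ) := hinf.toFinset
  have hmemF : ∀ b, b ∈ F ↔ Relation.ReflTransGen R a b := fun b =>
    Set.Finite.mem_toFinset hinf
  have haF : a ∈ F := (hmemF a).2 Relation.ReflTransGen.refl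
  have hhF : ∀ b ∈ F, h b = M := by
    intro b hb
    have hb' := (hmemF b).1 hb
    induction hb' with
    | refl => exact ha
    | tail _ hstep _ => exact hstep.2.1
  -- closure of F under lattice neighbours at level M
  have hclose : ∀ b ∈ F, ∀ m : Fin d → ℤ, h m = M →
      (∃ i : Fin d, m = b + Pi.single i 1 ∨ m = b - Pi.single i 1) → m ∈ F := by
    intro b hb m hm ⟨i, hcase⟩
    have hadj : Adj b m := by
      constructor
      · intro hbm
        have : b i = m i := congrFun hbm i
        rcases hcase with rfl | rfl <;>
          simp only [Pi.add_apply, Pi.sub_apply, Pi.single_eq_same] at this <;>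
          omega
      · intro j
        rcases hcase with rfl | rfl <;>
        · simp only [Pi.add_apply, Pi.sub_apply, Pi.single_apply]
          split_ifs <;> simp
    refine (hmemF m).2 (Relation.ReflTransGen.tail ((hmemF b).1 hb) ?_)
    exact ⟨hhF b hb, hm, hadj⟩
  have hne : F.Nonempty := ⟨a, haF⟩
  obtain ⟨n, hnF, hburn⟩ := hv.2 F hne
  -- the 2d lattice neighbours of n, indexed by Fin d × Bool
  set ν : Fin d × Bool → (Fin d → ℤ) :=
    fun p => cond p.2 (n + Pi.single p.1 1) (n - Pi.single p.1 1) with hνdef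
  have hinj : Function.Injective ν := by
    rintro ⟨i, bi⟩ ⟨j, bj⟩ hpq
    have hi := congrFun hpq i
    simp only [hνdef] at hi
    rcases bi <;> rcases bj <;>
      simp only [cond_true, cond_false, Pi.add_apply, Pi.sub_apply,
        Pi.single_eq_same] at hi
    · rcases eq_or_ne i j with rfl | hij
      · rfl
      · rw [Pi.single_eq_of_ne hij] at hi; omega
    · exfalso
      rcases eq_or_ne i j with rfl | hij
      · rw [Pi.single_eq_same] at hi; omega
      · rw [Pi.single_eq_of_ne hij] at hi; omega
    · exfalso
      rcases eq_or_ne i j with rfl | hij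
      · rw [Pi.single_eq_same] at hi; omega
      · rw [Pi.single_eq_of_ne hij] at hi; omega
    · rcases eq_or_ne i j with rfl | hij
      · rfl
      · rw [Pi.single_eq_of_ne hij] at hi; omega
  -- NN F n counted via the index set
  have himg : F.filter (fun m => ∃ i : Fin d,
      m = n + Pi.single i 1 ∨ m = n - Pi.single i 1)
      = (Finset.univ.filter fun p => ν p ∈ F).image ν := by
    ext m
    simp only [Finset.mem_filter, Finset.mem_image, Finset.mem_univ, true_and]
    constructor
    · rintro ⟨hmF, i, (rfl | rfl)⟩
      · exact ⟨(i, true), hmF, rfl⟩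
      · exact ⟨(i, false), hmF, rfl⟩
    · rintro ⟨⟨i, b⟩, hF, rfl⟩
      rcases b
      · exact ⟨hF, i, Or.inr rfl⟩
      · exact ⟨hF, i, Or.inl rfl⟩
  have hNN : (NN F n : ℤ) = ((Finset.univ.filter fun p => ν p ∈ F).card : ℤ) := by
    rw [NN, himg, Finset.card_image_of_injective _ hinj]
  -- each neighbour bound
  have hnbr : ∀ p : Fin d × Bool, h (ν p) ≤ M - 1 + (if ν p ∈ F then (1:ℤ) else 0) := by
    intro p
    by_cases hp : ν p ∈ F
    · rw [if_pos hp]; linarith [hub (ν p)]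
    · rw [if_neg hp]
      have : h (ν p) ≠ M := by
        intro hm
        refine hp (hclose n hnF (ν p) hm ⟨p.1, ?_⟩)
        rcases p with ⟨i, b⟩
        rcases b
        · exact Or.inr rfl
        · exact Or.inl rfl
      have := lt_of_le_of_ne (hub (ν p)) this
      omega
  -- sum over neighbours
  have hsum1 : ∑ i : Fin d, (h (n + Pi.single i 1) + h (n - Pi.single i 1))
      = ∑ p : Fin d × Bool, h (ν p) := by
    rw [Fintype.sum_prod_type]
    refine Finset.sum_congr rfl fun i _ => ?_
    rw [Fintype.sum_bool]
    rfl
  have hsum2 : ∑ p : Fin d × Bool, h (ν p)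
      ≤ (d : ℤ) * 2 * (M - 1) + (NN F n : ℤ) := by
    calc ∑ p : Fin d × Bool, h (ν p)
        ≤ ∑ p : Fin d × Bool, (M - 1 + (if ν p ∈ F then (1:ℤ) else 0)) :=
          Finset.sum_le_sum fun p _ => hnbr p
      _ = (d : ℤ) * 2 * (M - 1) + (NN F n : ℤ) := by
          rw [Finset.sum_add_distrib, Finset.sum_const, Finset.sum_boole, hNN]
          simp [Fintype.card_prod, mul_comm]
  -- conclude
  have hrange := (hv'.1 n).2
  simp only [fdConv] at hrange
  rw [hhF n hnF, hsum1] at hrange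
  have hprod : 0 ≤ (γ - 2 * (d:ℤ)) * (M - 1) :=
    mul_nonneg (by linarith) (by linarith)
  have : v n < (NN F n : ℤ) := by nlinarith [hsum2, hrange]
  omega
end
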